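/- (Rademacher complexity of the distillation loss class.) Let x₁, …, x_N ∈ ℝ^d, let f_T : ℝ^d → ℝ^m satisfy ‖f_T(xᵢ)‖ ≤ D for all i, let φᵢ ∈ ℝ^r satisfy ‖φᵢ‖ ≤ C for all i, and let B > 0. Then 𝔼_σ[ sup_{W ∈ ℝ^{m×r}, ‖W‖_F ≤ B} (1/N) Σ_{i=1}^N σᵢ ‖f_T(xᵢ) − W φᵢ‖² ] ≤ 2 B C (D + B C) / √N, where σ = (σ₁, …, σ_N) is distributed uniformly on {−1, +1}^N. -/

import Mathlib

/-
Expanding the square, `‖f − Wφ‖² = ‖f‖² − 2⟪W, f φᵀ⟫ + ⟪WᵀW, φ φᵀ⟫`. The first term does not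
depend on `W` and has Rademacher mean zero; the other two are inner products of `W`, resp. `WᵀW`
(of Frobenius norm `≤ B`, resp. `≤ B²`) with the Rademacher sums `Σ σᵢ fᵢ φᵢᵀ` and
`Σ σᵢ φᵢ φᵢᵀ`. Since the signs are orthogonal, `𝔼‖Σ σᵢ uᵢ‖ ≤ (𝔼‖Σ σᵢ uᵢ‖²)^{1/2} =
(Σ ‖uᵢ‖²)^{1/2} ≤ √N max ‖uᵢ‖`, which gives `(2BCD + B²C²)/√N`.
-/

open scoped BigOperators

/-- The ±1 sign associated to a Boolean: uniform `σ : Fin N → Bool` encodes a uniform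
Rademacher vector `σ : {−1,+1}^N`. -/
noncomputable def radSign (b : Bool) : ℝ := if b then 1 else -1

/-- The student output `W φ` for a weight matrix `W` viewed as an element of the Euclidean
space of `m × r` matrices (whose norm is the Frobenius norm). -/
noncomputable def studentApply {m r : ℕ} (W : EuclideanSpace ℝ (Fin m × Fin r))
    (v : EuclideanSpace ℝ (Fin r)) : EuclideanSpace ℝ (Fin m) :=
  WithLp.toLp 2 (fun a => ∑ s, W (a, s) * v s)

open Finset

lemma radSign_mul_self (b : Bool) : radSign b * radSign b = 1 := by
  cases b <;> simp [radSign]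

lemma radSign_not (b : Bool) : radSign (!b) = -radSign b := by
  cases b <;> simp [radSign]

lemma sum_radSign_mul_eq_zero {N : ℕ} (i : Fin N) (c : (Fin N → Bool) → ℝ)
    (hc : ∀ σ b, c (Function.update σ i b) = c σ) :
    ∑ σ : Fin N → Bool, radSign (σ i) * c σ = 0 := by
  have toggle : Function.Involutive fun σ : Fin N → Bool => Function.update σ i (!σ i) :=
    fun σ => by simp
  have h : ∑ σ, radSign (σ i) * c σ = ∑ σ, -(radSign (σ i) * c σ) :=
    Fintype.sum_bijective _ toggle.bijective _ _ fun σ => by simp [radSign_not, hc]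
  rw [sum_neg_distrib] at h
  linarith

lemma sum_sum_radSign_mul_eq_zero {N : ℕ} (a : Fin N → ℝ) :
    ∑ σ : Fin N → Bool, ∑ i, radSign (σ i) * a i = 0 := by
  rw [sum_comm]
  exact sum_eq_zero fun i _ => sum_radSign_mul_eq_zero i _ fun _ _ => rfl

lemma sum_radSign_mul_radSign {N : ℕ} (i j : Fin N) :
    ∑ σ : Fin N → Bool, radSign (σ i) * radSign (σ j) = if i = j then 2 ^ N else 0 := by
  split_ifs with hij
  · simp [hij, radSign_mul_self]
  · exact sum_radSign_mul_eq_zero i (fun σ => radSign (σ j)) fun σ b => by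
      simp [Function.update_of_ne (Ne.symm hij)]

section Rademacher

variable {E : Type*} [NormedAddCommGroup E] [InnerProductSpace ℝ E]

lemma sum_norm_sq_sum_radSign_smul {N : ℕ} (u : Fin N → E) :
    ∑ σ : Fin N → Bool, ‖∑ i, radSign (σ i) • u i‖ ^ 2 = 2 ^ N * ∑ i, ‖u i‖ ^ 2 := by
  have expand (σ : Fin N → Bool) : ‖∑ i, radSign (σ i) • u i‖ ^ 2
      = ∑ i, ∑ j, radSign (σ i) * radSign (σ j) * inner ℝ (u i) (u j) := by
    simp only [← real_inner_self_eq_norm_sq, sum_inner, inner_sum, real_inner_smul_left,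
      real_inner_smul_right]
    exact sum_congr rfl fun i _ => sum_congr rfl fun j _ => by rw [real_inner_comm]; ring
  simp only [expand]
  rw [sum_comm]
  simp only [sum_comm (s := (univ : Finset (Fin N → Bool))), ← sum_mul,
    sum_radSign_mul_radSign, ite_mul, zero_mul, sum_ite_eq, mem_univ, if_true,
    real_inner_self_eq_norm_sq, mul_sum]

lemma sum_norm_sum_radSign_smul_le {N : ℕ} (u : Fin N → E) {K : ℝ} (hK : ∀ i, ‖u i‖ ≤ K) :
    ∑ σ : Fin N → Bool, ‖∑ i, radSign (σ i) • u i‖ ≤ 2 ^ N * (√N * K) := by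
  rcases Nat.eq_zero_or_pos N with rfl | hN
  · simp
  have hK₀ : 0 ≤ K := (norm_nonneg _).trans (hK ⟨0, hN⟩)
  have cauchy_schwarz := sq_sum_le_card_mul_sum_sq (s := (univ : Finset (Fin N → Bool)))
    (f := fun σ => ‖∑ i, radSign (σ i) • u i‖)
  rw [sum_norm_sq_sum_radSign_smul] at cauchy_schwarz
  have hu : ∑ i, ‖u i‖ ^ 2 ≤ N * K ^ 2 := by
    simpa using sum_le_sum fun i (_ : i ∈ univ) => pow_le_pow_left₀ (norm_nonneg _) (hK i) 2
  refine abs_le_of_sq_le_sq' ?_ (by positivity) |>.2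
  calc _ ≤ _ := cauchy_schwarz
    _ ≤ (2 ^ N * (√N * K)) ^ 2 := by
      simp only [card_univ, Fintype.card_fun, Fintype.card_bool, Fintype.card_fin]
      rw [mul_pow, mul_pow, Real.sq_sqrt (Nat.cast_nonneg N)]
      push_cast
      nlinarith [pow_pos (two_pos (α := ℝ)) N]

end Rademacher

noncomputable def outerProduct {ι κ : Type*} (u : EuclideanSpace ℝ ι) (v : EuclideanSpace ℝ κ) :
    EuclideanSpace ℝ (ι × κ) :=
  WithLp.toLp 2 fun p => u p.1 * v p.2

/-- The entries of `Wᵀ W`. -/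
noncomputable def columnGram {ι κ : Type*} [Fintype ι] (W : EuclideanSpace ℝ (ι × κ)) :
    EuclideanSpace ℝ (κ × κ) :=
  WithLp.toLp 2 fun q => ∑ a, W (a, q.1) * W (a, q.2)

section Euclidean

variable {ι κ : Type*} [Fintype ι] [Fintype κ]

lemma norm_sq_eq_sum_sq (x : EuclideanSpace ℝ ι) : ‖x‖ ^ 2 = ∑ i, x i ^ 2 := by
  simp [EuclideanSpace.norm_sq_eq]

lemma real_inner_eq_sum_mul (x y : EuclideanSpace ℝ ι) : inner ℝ x y = ∑ i, x i * y i := by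
  simp [PiLp.inner_apply, mul_comm]

lemma norm_outerProduct (u : EuclideanSpace ℝ ι) (v : EuclideanSpace ℝ κ) :
    ‖outerProduct u v‖ = ‖u‖ * ‖v‖ := by
  rw [← sq_eq_sq₀ (norm_nonneg _) (by positivity), mul_pow, norm_sq_eq_sum_sq,
    norm_sq_eq_sum_sq, norm_sq_eq_sum_sq, sum_mul_sum, Fintype.sum_prod_type]
  simp [outerProduct, mul_pow]

lemma norm_outerProduct_le {u : EuclideanSpace ℝ ι} {v : EuclideanSpace ℝ κ} {a b : ℝ}
    (hu : ‖u‖ ≤ a) (hv : ‖v‖ ≤ b) : ‖outerProduct u v‖ ≤ a * b :=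
  norm_outerProduct u v ▸ mul_le_mul hu hv (norm_nonneg _) ((norm_nonneg _).trans hu)

lemma norm_columnGram_le (W : EuclideanSpace ℝ (ι × κ)) : ‖columnGram W‖ ≤ ‖W‖ ^ 2 := by
  rw [← sq_le_sq₀ (norm_nonneg _) (by positivity)]
  calc ‖columnGram W‖ ^ 2 = ∑ s, ∑ t, (∑ a, W (a, s) * W (a, t)) ^ 2 := by
        rw [norm_sq_eq_sum_sq, Fintype.sum_prod_type]
        rfl
    _ ≤ ∑ s, ∑ t, (∑ a, W (a, s) ^ 2) * ∑ a, W (a, t) ^ 2 := by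
        gcongr with s _ t _
        exact sum_mul_sq_le_sq_mul_sq _ _ _
    _ = (‖W‖ ^ 2) ^ 2 := by
        rw [norm_sq_eq_sum_sq, Fintype.sum_prod_type_right, sq, sum_mul_sum]

end Euclidean

lemma real_inner_studentApply {m r : ℕ} (W : EuclideanSpace ℝ (Fin m × Fin r))
    (u : EuclideanSpace ℝ (Fin m)) (v : EuclideanSpace ℝ (Fin r)) :
    inner ℝ u (studentApply W v) = inner ℝ W (outerProduct u v) := by
  simp only [real_inner_eq_sum_mul, studentApply, outerProduct, Fintype.sum_prod_type, mul_sum]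
  exact sum_congr rfl fun a _ => sum_congr rfl fun s _ => by ring

lemma norm_studentApply_sq {m r : ℕ} (W : EuclideanSpace ℝ (Fin m × Fin r))
    (v : EuclideanSpace ℝ (Fin r)) :
    ‖studentApply W v‖ ^ 2 = inner ℝ (columnGram W) (outerProduct v v) := by
  rw [norm_sq_eq_sum_sq]
  simp only [real_inner_eq_sum_mul, studentApply, outerProduct, columnGram,
    Fintype.sum_prod_type, sq, sum_mul, mul_sum]
  rw [sum_comm]
  refine sum_congr rfl fun s _ => ?_
  rw [sum_comm]
  exact sum_congr rfl fun t _ => sum_congr rfl fun a _ => by ring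

lemma sum_radSign_mul_norm_sub_studentApply_sq_le {m r N : ℕ}
    (f : Fin N → EuclideanSpace ℝ (Fin m)) (φ : Fin N → EuclideanSpace ℝ (Fin r))
    (σ : Fin N → Bool) {W : EuclideanSpace ℝ (Fin m × Fin r)} {B : ℝ} (hW : ‖W‖ ≤ B) :
    ∑ i, radSign (σ i) * ‖f i - studentApply W (φ i)‖ ^ 2
      ≤ ∑ i, radSign (σ i) * ‖f i‖ ^ 2
        + 2 * B * ‖∑ i, radSign (σ i) • outerProduct (f i) (φ i)‖
        + B ^ 2 * ‖∑ i, radSign (σ i) • outerProduct (φ i) (φ i)‖ := by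
  set U := ∑ i, radSign (σ i) • outerProduct (f i) (φ i)
  set V := ∑ i, radSign (σ i) • outerProduct (φ i) (φ i)
  have expand : ∑ i, radSign (σ i) * ‖f i - studentApply W (φ i)‖ ^ 2
      = ∑ i, radSign (σ i) * ‖f i‖ ^ 2 - 2 * inner ℝ W U + inner ℝ (columnGram W) V := by
    simp only [U, V, norm_sub_sq_real, real_inner_studentApply, norm_studentApply_sq, inner_sum,
      real_inner_smul_right, mul_add, mul_sub, sum_add_distrib, sum_sub_distrib, mul_sum]
    ring_nf
  have cross : -(2 * inner ℝ W U) ≤ 2 * B * ‖U‖ := by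
    nlinarith [neg_abs_le (inner ℝ W U), abs_real_inner_le_norm W U, norm_nonneg U]
  have quadratic : inner ℝ (columnGram W) V ≤ B ^ 2 * ‖V‖ :=
    calc inner ℝ (columnGram W) V ≤ ‖columnGram W‖ * ‖V‖ := real_inner_le_norm _ _
      _ ≤ B ^ 2 * ‖V‖ := by
        gcongr
        exact (norm_columnGram_le W).trans (pow_le_pow_left₀ (norm_nonneg _) hW 2)
  linarith

/-- **Empirical Rademacher complexity of the distillation loss class.**
If `‖f_T(xᵢ)‖ ≤ D`, `‖φᵢ‖ ≤ C` and `B > 0`, then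
`𝔼_σ[ sup_{‖W‖_F ≤ B} (1/N) Σᵢ σᵢ ‖f_T(xᵢ) − Wφᵢ‖² ] ≤ 2BC(D+BC)/√N`,
the expectation being over `σ` uniform on `{−1,+1}^N`. -/
theorem rademacher_distillation_loss_class (d m r N : ℕ)
    (x : Fin N → EuclideanSpace ℝ (Fin d))
    (fT : EuclideanSpace ℝ (Fin d) → EuclideanSpace ℝ (Fin m))
    (D : ℝ) (hD : ∀ i, ‖fT (x i)‖ ≤ D)
    (φ : Fin N → EuclideanSpace ℝ (Fin r))
    (C : ℝ) (hC : ∀ i, ‖φ i‖ ≤ C)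
    (B : ℝ) (hB : 0 < B) :
    (1 / 2 ^ N : ℝ) * ∑ σ : Fin N → Bool,
        (⨆ W : {W : EuclideanSpace ℝ (Fin m × Fin r) // ‖W‖ ≤ B},
          (1 / (N : ℝ)) * ∑ i, radSign (σ i) *
            ‖fT (x i) - studentApply (W : EuclideanSpace ℝ (Fin m × Fin r)) (φ i)‖ ^ 2)
      ≤ 2 * B * C * (D + B * C) / Real.sqrt N := by
  set U := fun σ : Fin N → Bool => ∑ i, radSign (σ i) • outerProduct (fT (x i)) (φ i)
  set V := fun σ : Fin N → Bool => ∑ i, radSign (σ i) • outerProduct (φ i) (φ i)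
  have : Nonempty {W : EuclideanSpace ℝ (Fin m × Fin r) // ‖W‖ ≤ B} := ⟨⟨0, by simpa using hB.le⟩⟩
  have sum_U : ∑ σ, ‖U σ‖ ≤ 2 ^ N * (√N * (D * C)) :=
    sum_norm_sum_radSign_smul_le _ fun i => norm_outerProduct_le (hD i) (hC i)
  have sum_V : ∑ σ, ‖V σ‖ ≤ 2 ^ N * (√N * (C * C)) :=
    sum_norm_sum_radSign_smul_le _ fun i => norm_outerProduct_le (hC i) (hC i)
  calc _ ≤ (1 / 2 ^ N : ℝ) * ∑ σ : Fin N → Bool,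
        1 / (N : ℝ) * (∑ i, radSign (σ i) * ‖fT (x i)‖ ^ 2 + 2 * B * ‖U σ‖ + B ^ 2 * ‖V σ‖) := by
        gcongr with σ
        exact ciSup_le fun W => mul_le_mul_of_nonneg_left
          (sum_radSign_mul_norm_sub_studentApply_sq_le (fun i => fT (x i)) φ σ W.2) (by positivity)
    _ = (1 / 2 ^ N : ℝ) * (1 / N) * (∑ σ : Fin N → Bool, ∑ i, radSign (σ i) * ‖fT (x i)‖ ^ 2
          + 2 * B * ∑ σ, ‖U σ‖ + B ^ 2 * ∑ σ, ‖V σ‖) := by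
        simp only [← mul_sum, sum_add_distrib]
        ring
    _ ≤ (1 / 2 ^ N : ℝ) * (1 / N) * (0 + 2 * B * (2 ^ N * (√N * (D * C)))
          + B ^ 2 * (2 ^ N * (√N * (C * C)))) := by
        rw [sum_sum_radSign_mul_eq_zero]
        gcongr
    _ = (2 * B * C * D + (B * C) ^ 2) * (√N / N) := by
        field_simp
        ring
    _ ≤ 2 * B * C * (D + B * C) / √N := by
        rw [Real.sqrt_div_self', mul_one_div]
        gcongr
        nlinarith [sq_nonneg (B * C)]
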